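/- Let (X,d_X) be a starry metric space and (Y,d_Y) a doubling metric space. Then no topological embedding φ : X → Y (i.e., homeomorphism onto its image φ(X) with the metric induced from Y) can be Ψ-quasisymmetric for any increasing function Ψ : (0,∞) → (0,∞). -/
import Mathlib


open Metric Set

/-- A metric space contains an `(A,η)`-approximate `n`-star. -/
def HasApproxStar (X : Type*) [PseudoMetricSpace X] (A η : ℝ) (n : ℕ) : Prop :=
  ∃ ρ : ℝ, 0 < ρ ∧ ∃ x : Fin (n + 1) → X,
    (∀ i j : Fin (n + 1), i ≠ 0 → j ≠ 0 → i ≠ j →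
      (A - η) * ρ ≤ dist (x i) (x j) ∧ dist (x i) (x j) ≤ A * ρ) ∧
    (∀ i : Fin (n + 1), i ≠ 0 → ρ ≤ dist (x 0) (x i) ∧ dist (x 0) (x i) ≤ (1 + η) * ρ)

/-- A metric space is starry if there are uniform `A > 1` and `0 < η < (A-1)/2` such that for
every `n` the space contains an `(Aₙ,η)`-approximate `n`-star for some `Aₙ ≥ A`. -/
def Starry (X : Type*) [PseudoMetricSpace X] : Prop :=
  ∃ A η : ℝ, 1 < A ∧ 0 < η ∧ η < (A - 1) / 2 ∧
    ∀ n : ℕ, ∃ An : ℝ, A ≤ An ∧ HasApproxStar X An η n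

/-- `Ψ` is an increasing function `(0,∞) → (0,∞)`. -/
def IncreasingOnPos (Ψ : ℝ → ℝ) : Prop :=
  (∀ t : ℝ, 0 < t → 0 < Ψ t) ∧ StrictMonoOn Ψ (Set.Ioi 0)

/-- A map `φ` is `Ψ`-quasisymmetric. -/
def IsQuasisymmetric {X Y : Type*} [PseudoMetricSpace X] [PseudoMetricSpace Y]
    (φ : X → Y) (Ψ : ℝ → ℝ) : Prop :=
  ∀ x y z : X, x ≠ y → x ≠ z → y ≠ z →
    dist (φ x) (φ y) / dist (φ x) (φ z) ≤ Ψ (dist x y / dist x z)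

/-- A metric space is doubling: there is `K > 0` such that every closed ball `B(x,r)` can be
covered by at most `K` closed balls of radius `r/2`. -/
def DoublingSpace (X : Type*) [PseudoMetricSpace X] : Prop :=
  ∃ K : ℕ, 0 < K ∧ ∀ (x : X) (r : ℝ), 0 < r →
    ∃ s : Finset X, s.card ≤ K ∧ closedBall x r ⊆ ⋃ y ∈ s, closedBall y (r / 2)

/-- Iterated doubling: `B(x,r)` is covered by `K^m` balls of radius `r/2^m`. -/
lemma doubling_iter {Y : Type*} [PseudoMetricSpace Y] [DecidableEq Y] {K : ℕ}
    (hK : ∀ (x : Y) (r : ℝ), 0 < r →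
      ∃ s : Finset Y, s.card ≤ K ∧ closedBall x r ⊆ ⋃ y ∈ s, closedBall y (r / 2)) :
    ∀ (m : ℕ) (x : Y) (r : ℝ), 0 < r → ∃ s : Finset Y, s.card ≤ K ^ m ∧
      closedBall x r ⊆ ⋃ y ∈ s, closedBall y (r / 2 ^ m) := by
  intro m
  induction m with
  | zero =>
    intro x r hr
    exact ⟨{x}, by simp, by simp⟩
  | succ m ih =>
    intro x r hr
    obtain ⟨s, hcard, hcov⟩ := ih x r hr
    choose t ht1 ht2 using fun y : Y => hK y (r / 2 ^ m) (by positivity)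
    refine ⟨s.biUnion t, ?_, ?_⟩
    · calc (s.biUnion t).card ≤ ∑ y ∈ s, (t y).card := Finset.card_biUnion_le
        _ ≤ ∑ _y ∈ s, K := Finset.sum_le_sum (fun y _ => ht1 y)
        _ = s.card * K := by rw [Finset.sum_const, smul_eq_mul]
        _ ≤ K ^ m * K := Nat.mul_le_mul_right _ hcard
        _ = K ^ (m + 1) := (pow_succ K m).symm
    · intro z hz
      obtain ⟨y, hy, hzy⟩ := mem_iUnion₂.mp (hcov hz)
      obtain ⟨w, hw, hzw⟩ := mem_iUnion₂.mp (ht2 y hzy)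
      refine mem_iUnion₂.mpr ⟨w, Finset.mem_biUnion.mpr ⟨y, hy, hw⟩, ?_⟩
      have hhalf : r / 2 ^ m / 2 = r / 2 ^ (m + 1) := by ring
      rwa [hhalf] at hzw

theorem starry_no_quasisymmetric_embedding_into_doubling
    {X Y : Type*} [MetricSpace X] [MetricSpace Y]
    (hX : Starry X) (hY : DoublingSpace Y)
    (φ : X → Y) (hemb : Topology.IsEmbedding φ)
    (Ψ : ℝ → ℝ) (hΨ : IncreasingOnPos Ψ) :
    ¬ IsQuasisymmetric φ Ψ := by
  classical
  intro hqs
  obtain ⟨A, η, hA, hη, hη2, hstar⟩ := hX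
  obtain ⟨K, hKpos, hdb⟩ := hY
  have hinj : Function.Injective φ := hemb.injective
  have hΨpos := hΨ.1
  have hΨmono : MonotoneOn Ψ (Set.Ioi 0) := hΨ.2.monotoneOn
  set c : ℝ := (1 + η) / (A - η) with hc_def
  have hAη : (0 : ℝ) < A - η := by linarith
  have hc : 0 < c := div_pos (by linarith) hAη
  have hΨc : 0 < Ψ c := hΨpos _ hc
  set B : ℝ := max (Ψ (1 + η)) 1 with hB_def
  have hB1 : (1 : ℝ) ≤ B := le_max_right _ _
  have hB0 : (0 : ℝ) < B := lt_of_lt_of_le one_pos hB1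
  obtain ⟨m, hm⟩ := pow_unbounded_of_one_lt (2 * (B ^ 2 * Ψ c)) (by norm_num : (1 : ℝ) < 2)
  set n : ℕ := K ^ m + 1 with hn_def
  obtain ⟨An, hAn, ρ, hρ, x, hpair, hcen⟩ := hstar n
  have hAnη : (0 : ℝ) < An - η := by linarith
  -- distinctness facts
  have hne0 : ∀ i : Fin (n + 1), i ≠ 0 → x 0 ≠ x i := by
    intro i hi h
    have h1 := (hcen i hi).1
    rw [← h, dist_self] at h1
    linarith
  have hneij : ∀ i j : Fin (n + 1), i ≠ 0 → j ≠ 0 → i ≠ j → x i ≠ x j := by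
    intro i j hi hj hij h
    have h1 := (hpair i j hi hj hij).1
    rw [← h, dist_self] at h1
    nlinarith
  -- positivity of image distances
  have hd0 : ∀ i : Fin (n + 1), i ≠ 0 → 0 < dist (φ (x 0)) (φ (x i)) :=
    fun i hi => dist_pos.mpr (fun h => hne0 i hi (hinj h))
  have hdij : ∀ i j : Fin (n + 1), i ≠ 0 → j ≠ 0 → i ≠ j →
      0 < dist (φ (x i)) (φ (x j)) :=
    fun i j hi hj hij => dist_pos.mpr (fun h => hneij i j hi hj hij (hinj h))
  -- Bound 1: ratios of the radii dist(φ x0, φ xi)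
  have hratio : ∀ i j : Fin (n + 1), i ≠ 0 → j ≠ 0 →
      dist (φ (x 0)) (φ (x i)) ≤ B * dist (φ (x 0)) (φ (x j)) := by
    intro i j hi hj
    rcases eq_or_ne i j with rfl | hij
    · nlinarith [hd0 i hi]
    have h1 := hqs (x 0) (x i) (x j) (hne0 i hi) (hne0 j hj) (hneij i j hi hj hij)
    have hdj : 0 < dist (x 0) (x j) := lt_of_lt_of_le hρ (hcen j hj).1
    have hdi : 0 < dist (x 0) (x i) := lt_of_lt_of_le hρ (hcen i hi).1
    have harg : dist (x 0) (x i) / dist (x 0) (x j) ≤ 1 + η := by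
      rw [div_le_iff₀ hdj]
      calc dist (x 0) (x i) ≤ (1 + η) * ρ := (hcen i hi).2
        _ ≤ (1 + η) * dist (x 0) (x j) := by nlinarith [(hcen j hj).1]
    have h2 : Ψ (dist (x 0) (x i) / dist (x 0) (x j)) ≤ Ψ (1 + η) :=
      hΨmono (Set.mem_Ioi.mpr (div_pos hdi hdj))
        (Set.mem_Ioi.mpr (by linarith)) harg
    have h3 : dist (φ (x 0)) (φ (x i)) / dist (φ (x 0)) (φ (x j)) ≤ B :=
      le_trans (le_trans h1 h2) (le_max_left _ _)
    rw [div_le_iff₀ (hd0 j hj)] at h3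
    linarith [mul_le_mul_of_nonneg_left (le_refl (dist (φ (x 0)) (φ (x j)))) hB0.le]
  -- Bound 2: separation of the images
  have hsep : ∀ i j : Fin (n + 1), i ≠ 0 → j ≠ 0 → i ≠ j →
      dist (φ (x 0)) (φ (x i)) ≤ Ψ c * dist (φ (x i)) (φ (x j)) := by
    intro i j hi hj hij
    have h1 := hqs (x i) (x 0) (x j) (Ne.symm (hne0 i hi)) (hneij i j hi hj hij)
      (hne0 j hj)
    have hdij' := hdij i j hi hj hij
    have hdxij : 0 < dist (x i) (x j) :=
      dist_pos.mpr (hneij i j hi hj hij)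
    have hdxi0 : 0 < dist (x i) (x 0) := by
      rw [dist_comm]; exact lt_of_lt_of_le hρ (hcen i hi).1
    have harg : dist (x i) (x 0) / dist (x i) (x j) ≤ c := by
      rw [hc_def, div_le_div_iff₀ hdxij hAη]
      have ha : dist (x i) (x 0) ≤ (1 + η) * ρ := by
        rw [dist_comm]; exact (hcen i hi).2
      have hb : (An - η) * ρ ≤ dist (x i) (x j) := (hpair i j hi hj hij).1
      nlinarith [hρ, hη]
    have h2 : Ψ (dist (x i) (x 0) / dist (x i) (x j)) ≤ Ψ c :=
      hΨmono (Set.mem_Ioi.mpr (div_pos hdxi0 hdxij)) (Set.mem_Ioi.mpr hc) harg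
    have h3 : dist (φ (x i)) (φ (x 0)) / dist (φ (x i)) (φ (x j)) ≤ Ψ c :=
      le_trans h1 h2
    rw [div_le_iff₀ hdij'] at h3
    rw [dist_comm (φ (x 0)) (φ (x i))]
    exact h3
  -- set up the ball and separation scales
  set i1 : Fin (n + 1) := ⟨1, by omega⟩ with hi1_def
  have hi1 : i1 ≠ 0 := by
    intro h
    have := congrArg Fin.val h
    simp [hi1_def] at this
  set r1 : ℝ := dist (φ (x 0)) (φ (x i1)) with hr1_def
  have hr1 : 0 < r1 := hd0 i1 hi1
  -- the points
  set s : Fin n → Fin (n + 1) := fun k => ⟨k.1 + 1, by omega⟩ with hs_def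
  have hs0 : ∀ k, s k ≠ 0 := by
    intro k h
    have := congrArg Fin.val h
    simp [hs_def] at this
  have hsinj : Function.Injective s := by
    intro k l h
    have := congrArg Fin.val h
    simp [hs_def] at this
    exact Fin.ext this
  -- all points in the ball of radius B * r1
  have hball : ∀ k : Fin n, φ (x (s k)) ∈ closedBall (φ (x 0)) (B * r1) := by
    intro k
    rw [mem_closedBall, dist_comm]
    exact hratio (s k) i1 (hs0 k) hi1
  -- separation δ := r1 / (B * Ψ c)
  have hsep' : ∀ k l : Fin n, k ≠ l →
      r1 / (B * Ψ c) ≤ dist (φ (x (s k))) (φ (x (s l))) := by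
    intro k l hkl
    have hskl : s k ≠ s l := fun h => hkl (hsinj h)
    have h1 : r1 ≤ B * dist (φ (x 0)) (φ (x (s k))) := hratio i1 (s k) hi1 (hs0 k)
    have h2 : dist (φ (x 0)) (φ (x (s k))) ≤
        Ψ c * dist (φ (x (s k))) (φ (x (s l))) :=
      hsep (s k) (s l) (hs0 k) (hs0 l) hskl
    rw [div_le_iff₀ (by positivity)]
    calc r1 ≤ B * dist (φ (x 0)) (φ (x (s k))) := h1
      _ ≤ B * (Ψ c * dist (φ (x (s k))) (φ (x (s l)))) := by nlinarith
      _ = dist (φ (x (s k))) (φ (x (s l))) * (B * Ψ c) := by ring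
  -- apply the iterated doubling to get a contradiction
  obtain ⟨S, hScard, hScov⟩ := doubling_iter hdb m (φ (x 0)) (B * r1) (by positivity)
  have hchoice : ∀ k : Fin n, ∃ w ∈ S, φ (x (s k)) ∈ closedBall w (B * r1 / 2 ^ m) := by
    intro k
    obtain ⟨w, hw, hz⟩ := mem_iUnion₂.mp (hScov (hball k))
    exact ⟨w, hw, hz⟩
  choose f hfS hfd using hchoice
  have hfinj : Function.Injective f := by
    intro k l h
    by_contra hkl
    have h1 := hfd k
    have h2 := hfd l
    rw [mem_closedBall] at h1 h2
    have h3 : dist (φ (x (s k))) (φ (x (s l))) ≤ 2 * (B * r1 / 2 ^ m) := by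
      calc dist (φ (x (s k))) (φ (x (s l))) ≤
          dist (φ (x (s k))) (f k) + dist (f l) (φ (x (s l))) := by
            rw [h]; exact dist_triangle _ _ _
        _ ≤ 2 * (B * r1 / 2 ^ m) := by rw [dist_comm (f l)]; linarith
    have h4 := hsep' k l hkl
    -- r1 / (B * Ψ c) > 2 * (B * r1 / 2^m)  since 2^m > 2 * B^2 * Ψ c
    have h2m : (0 : ℝ) < 2 ^ m := by positivity
    have hlt : 2 * (B * r1 / 2 ^ m) < r1 / (B * Ψ c) := by
      have e : 2 * (B * r1 / 2 ^ m) = 2 * (B * r1) / 2 ^ m := by ring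
      rw [e, div_lt_div_iff₀ h2m (by positivity)]
      nlinarith [mul_lt_mul_of_pos_left hm hr1]
    linarith
  have hcard : n ≤ S.card := by
    have := Finset.card_le_card_of_injOn (s := (Finset.univ : Finset (Fin n))) f
      (fun k _ => hfS k) (Set.injOn_of_injective hfinj)
    simpa using this
  have : K ^ m + 1 ≤ K ^ m := le_trans (le_of_eq hn_def.symm) (le_trans hcard hScard)
  omega
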